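/- arXiv:2005.06290 — 2 statements merged into one kernel-verified Lean document; each statement's English description precedes it below -/
import Mathlib

section
/- For β ∈ T_n, write ψ_{n+1}(ι^R(β)) = [[ψ_n(β), 0],[v^R(β), 1]] with v^R(β) = (b_1,...,b_{n−1}). Let a_{i,k} be the entries of ψ_n(β) − I_{n−1}. Then for each k, −U_{n−1}(1/x)·b_k = Σ_{i=1}^{n−1} U_{i−1}(1/x)·a_{i,k} as identities in ℤ(x). -/
open Matrix Polynomial

/-- Deformed Tits matrix `V_i` (generator index `i` is 1-based, `1 ≤ i ≤ m`):
the identity `m × m` matrix except column `i`, which has `-1` on the diagonal,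
`y` in row `i-1` and `x` in row `i+1`. -/
def Vmat {R : Type*} [CommRing R] (x y : R) (m i : ℕ) : Matrix (Fin m) (Fin m) R :=
  Matrix.of fun r c =>
    if (c : ℕ) + 1 = i then
      if (r : ℕ) + 1 = i then -1
      else if (r : ℕ) + 2 = i then y
      else if (r : ℕ) = i then x
      else 0
    else if r = c then 1 else 0

/-- Relators of the twin group with `m` generators (the twin group on `m+1` strands). -/
def twinRels (m : ℕ) : Set (FreeGroup (Fin m)) :=
  {r | (∃ i, r = FreeGroup.of i * FreeGroup.of i) ∨
       (∃ i j : Fin m, (i : ℕ) + 1 < (j : ℕ) ∧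
          r = FreeGroup.of i * FreeGroup.of j * (FreeGroup.of i)⁻¹ * (FreeGroup.of j)⁻¹)}

/-- The twin group `T_{m+1}` on `m+1` strands, with `m` generators `t_1, …, t_m`;
the generator `t_{i+1}` is `TwinGroup.of i` for `i : Fin m`. -/
def TwinGroup (m : ℕ) : Type := PresentedGroup (twinRels m)

instance (m : ℕ) : Group (TwinGroup m) :=
  inferInstanceAs (Group (PresentedGroup (twinRels m)))

/-- The generator `t_{i+1}` of the twin group. -/
def TwinGroup.of {m : ℕ} (i : Fin m) : TwinGroup m := PresentedGroup.of i

/-- The field `ℤ(x)` of rational functions over `ℤ`. -/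
noncomputable abbrev Zx : Type := FractionRing (Polynomial ℤ)

/-- The element `x` of `ℤ(x)`. -/
noncomputable def xx : Zx := algebraMap (Polynomial ℤ) Zx Polynomial.X

/-- `U_n(1/x)` as an element of `ℤ(x)`, `U_n` the `n`-th Chebyshev polynomial
of the second kind. -/
noncomputable def Ux (n : ℕ) : Zx := Polynomial.eval xx⁻¹ (Polynomial.Chebyshev.U Zx n)

/-- `U_n(1/x)` with integer index. -/
noncomputable def UxZ (n : ℤ) : Zx := Polynomial.eval xx⁻¹ (Polynomial.Chebyshev.U Zx n)

lemma Ux_eq (n : ℕ) : Ux n = UxZ n := rfl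

lemma xx_ne_zero : xx ≠ 0 := by
  intro h
  have := IsFractionRing.injective (Polynomial ℤ) Zx (h.trans (map_zero _).symm)
  exact Polynomial.X_ne_zero this

lemma cheb (n : ℤ) : -UxZ n + xx * UxZ (n - 1) + xx * UxZ (n + 1) = UxZ n := by
  have h := Polynomial.Chebyshev.U_add_two Zx (n - 1)
  have h2 : UxZ (n + 1) = 2 * xx⁻¹ * UxZ n - UxZ (n - 1) := by
    have : n - 1 + 2 = n + 1 := by ring
    rw [this] at h
    have : n - 1 + 1 = n := by ring
    rw [this] at h
    unfold UxZ
    rw [h]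
    simp
  rw [h2]
  have hx := xx_ne_zero
  field_simp
  ring

lemma sum_coe_ite {M : ℕ} (v : ℕ) (f : Fin M → Zx) :
    (∑ r : Fin M, if (r : ℕ) = v then f r else 0) = if h : v < M then f ⟨v, h⟩ else 0 := by
  split
  · next h =>
    have he : ∀ r : Fin M, ((r : ℕ) = v) = (r = ⟨v, h⟩) := by
      intro r; simp [Fin.ext_iff]
    simp only [he]
    simp [Finset.sum_ite_eq']
  · next h =>
    apply Finset.sum_eq_zero
    intro r _
    rw [if_neg]
    omega

/-- Corollary 3.6(a): with `ψ_{n+1}(ι^R(β)) = [[ψ_n(β), 0],[v^R(β), 1]]`,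
`v^R(β) = (b_1,…,b_{n−1})` and `(a_{i,k}) = ψ_n(β) − I_{n−1}`, one has
`−U_{n−1}(1/x)·b_k = Σ_{i=1}^{n−1} U_{i−1}(1/x)·a_{i,k}` for every `k`. -/
theorem stmt11 (m : ℕ) (hm : 1 ≤ m)
    (ψ : TwinGroup m →* Matrix (Fin m) (Fin m) Zx)
    (hψ : ∀ i : Fin m, ψ (TwinGroup.of i) = Vmat xx xx m ((i : ℕ) + 1))
    (ψ' : TwinGroup (m+1) →* Matrix (Fin (m+1)) (Fin (m+1)) Zx)
    (hψ' : ∀ i : Fin (m+1), ψ' (TwinGroup.of i) = Vmat xx xx (m+1) ((i : ℕ) + 1))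
    (ιR : TwinGroup m →* TwinGroup (m+1))
    (hιR : ∀ i : Fin m, ιR (TwinGroup.of i) = TwinGroup.of i.castSucc)
    (β : TwinGroup m) :
    ∀ k : Fin m,
      -(Ux m) * ψ' (ιR β) (Fin.last m) k.castSucc
        = ∑ i : Fin m, Ux i * ((ψ β - 1) i k) := by
  intro k
  set w : Fin (m+1) → Zx := fun r => Ux (r : ℕ) with hw
  -- the key invariant
  set P : TwinGroup m → Prop := fun γ =>
    (∀ a b : Fin m, ψ' (ιR γ) a.castSucc b.castSucc = ψ γ a b) ∧
    (∀ a : Fin m, ψ' (ιR γ) a.castSucc (Fin.last m) = 0) ∧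
    Matrix.vecMul w (ψ' (ιR γ)) = w with hP
  have hP1 : P 1 := by
    refine ⟨?_, ?_, ?_⟩ <;> simp [hP, Matrix.one_apply, Fin.castSucc_inj,
      (Fin.castSucc_lt_last _).ne, Matrix.vecMul_one]
  have hPmul : ∀ γ δ, P γ → P δ → P (γ * δ) := by
    intro γ δ hγ hδ
    obtain ⟨hγ1, hγ2, hγ3⟩ := hγ
    obtain ⟨hδ1, hδ2, hδ3⟩ := hδ
    refine ⟨?_, ?_, ?_⟩
    · intro a b
      rw [_root_.map_mul ιR, _root_.map_mul ψ', _root_.map_mul ψ, Matrix.mul_apply,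
        Matrix.mul_apply, Fin.sum_univ_castSucc, hγ2 a, zero_mul, add_zero]
      exact Finset.sum_congr rfl fun j _ => by rw [hγ1, hδ1]
    · intro a
      rw [_root_.map_mul ιR, _root_.map_mul ψ', Matrix.mul_apply, Fin.sum_univ_castSucc,
        hγ2 a, zero_mul, add_zero]
      apply Finset.sum_eq_zero
      intro j _
      rw [hδ2 j, mul_zero]
    · rw [_root_.map_mul ιR, _root_.map_mul ψ', ← Matrix.vecMul_vecMul, hγ3, hδ3]
  have hPgen : ∀ i : Fin m, P (TwinGroup.of i) := by
    intro i
    have hA : ψ' (ιR (TwinGroup.of i)) = Vmat xx xx (m+1) ((i : ℕ) + 1) := by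
      rw [hιR i, hψ' i.castSucc, Fin.coe_castSucc]
    refine ⟨?_, ?_, ?_⟩
    · intro a b
      rw [hA, hψ i]
      simp only [Vmat, Matrix.of_apply, Fin.coe_castSucc, Fin.castSucc_inj]
    · intro a
      rw [hA]
      simp only [Vmat, Matrix.of_apply]
      rw [if_neg (by simp; omega), if_neg (Fin.castSucc_lt_last a).ne]
    · rw [hA]
      funext c
      rw [Matrix.vecMul]
      simp only [dotProduct]
      by_cases hc : (c : ℕ) = (i : ℕ)
      · have key : ∀ r : Fin (m+1), w r * Vmat xx xx (m+1) ((i:ℕ)+1) r c =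
            (if (r : ℕ) = (i : ℕ) then -(w r) else 0) +
            (if (r : ℕ) = (i : ℕ) - 1 ∧ 1 ≤ (i : ℕ) then xx * w r else 0) +
            (if (r : ℕ) = (i : ℕ) + 1 then xx * w r else 0) := by
          intro r
          simp only [Vmat, Matrix.of_apply, if_pos (by omega : (c:ℕ) + 1 = (i:ℕ) + 1)]
          split_ifs <;> (try (exfalso; omega)) <;> ring
        rw [Finset.sum_congr rfl fun r _ => key r]
        rw [Finset.sum_add_distrib, Finset.sum_add_distrib]
        have s1 : (∑ r : Fin (m+1), if (r : ℕ) = (i : ℕ) then -(w r) else 0) =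
            -UxZ (i : ℕ) := by
          rw [sum_coe_ite (i:ℕ) (fun r => -(w r)), dif_pos (by omega)]
          simp [hw, Ux_eq]
        have s3 : (∑ r : Fin (m+1), if (r : ℕ) = (i : ℕ) + 1 then xx * w r else 0) =
            xx * UxZ ((i : ℕ) + 1) := by
          rw [sum_coe_ite ((i:ℕ)+1) (fun r => xx * w r), dif_pos (by omega)]
          simp [hw, Ux_eq]
        have s2 : (∑ r : Fin (m+1), if (r : ℕ) = (i : ℕ) - 1 ∧ 1 ≤ (i : ℕ) then xx * w r else 0) =
            xx * UxZ ((i : ℕ) - 1) := by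
          rcases Nat.eq_zero_or_pos (i : ℕ) with h0 | h0
          · rw [Finset.sum_eq_zero (fun r _ => by rw [if_neg (by omega)])]
            rw [h0]
            simp only [Nat.cast_zero, zero_sub]
            unfold UxZ
            rw [Polynomial.Chebyshev.U_neg_one]
            simp
          · have : ∀ r : Fin (m+1), ((r : ℕ) = (i : ℕ) - 1 ∧ 1 ≤ (i : ℕ)) = ((r : ℕ) = (i : ℕ) - 1) := by
              intro r; rw [eq_iff_iff]; omega
            simp only [this]
            rw [sum_coe_ite ((i:ℕ) - 1) (fun r => xx * w r), dif_pos (by omega)]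
            have : ((i : ℕ) : ℤ) - 1 = (((i : ℕ) - 1 : ℕ) : ℤ) := by omega
            rw [this]
            simp [hw, Ux_eq]
        rw [s1, s2, s3, cheb]
        simp [hw, Ux_eq, hc]
      · have : ∀ r : Fin (m+1), w r * Vmat xx xx (m+1) ((i:ℕ)+1) r c =
            if r = c then w r else 0 := by
          intro r
          simp only [Vmat, Matrix.of_apply, if_neg (by omega : ¬((c:ℕ) + 1 = (i:ℕ) + 1))]
          split <;> simp
        rw [Finset.sum_congr rfl fun r _ => this r, Finset.sum_ite_eq']
        simp
  have hPall : P β := by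
    have hsq : ∀ i : Fin m, TwinGroup.of i * TwinGroup.of i = 1 := by
      intro i
      have hmem : (FreeGroup.of i * FreeGroup.of i) ∈
          Subgroup.normalClosure (twinRels m) :=
        Subgroup.subset_normalClosure (Or.inl ⟨i, rfl⟩)
      exact (QuotientGroup.eq_one_iff _).mpr hmem
    have hinv : ∀ i : Fin m, (TwinGroup.of i)⁻¹ = TwinGroup.of i := fun i =>
      inv_eq_of_mul_eq_one_right (hsq i)
    have key : ∀ z : FreeGroup (Fin m),
        P (QuotientGroup.mk z : PresentedGroup (twinRels m)) := by
      intro z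
      refine FreeGroup.induction_on z hP1 (fun x => hPgen x) (fun x hx => ?_) ?_
      · show P ((QuotientGroup.mk ((FreeGroup.of x)⁻¹) : PresentedGroup (twinRels m)))
        have hq : (QuotientGroup.mk ((FreeGroup.of x)⁻¹) : PresentedGroup (twinRels m)) =
            (TwinGroup.of x)⁻¹ := rfl
        rw [hq, hinv x]
        exact hPgen x
      · intro a b ha hb
        exact hPmul _ _ ha hb
    exact QuotientGroup.induction_on β key
  obtain ⟨h1, _, h3⟩ := hPall
  have hcol := congrFun h3 k.castSucc
  rw [Matrix.vecMul] at hcol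
  simp only [dotProduct] at hcol
  rw [Fin.sum_univ_castSucc] at hcol
  have hsum : (∑ j : Fin m, w j.castSucc * ψ' (ιR β) j.castSucc k.castSucc) =
      ∑ j : Fin m, Ux j * ψ β j k := by
    refine Finset.sum_congr rfl fun j _ => ?_
    rw [h1 j k]
    simp [hw]
  rw [hsum] at hcol
  have hlast : w (Fin.last m) = Ux m := by simp [hw]
  have hwk : w k.castSucc = Ux k := by simp [hw]
  rw [hlast, hwk] at hcol
  have hrhs : (∑ i : Fin m, Ux i * ((ψ β - 1) i k)) =
      (∑ i : Fin m, Ux i * ψ β i k) - Ux k := by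
    simp only [Matrix.sub_apply, Matrix.one_apply, mul_sub]
    rw [Finset.sum_sub_distrib]
    congr 1
    rw [Finset.sum_congr rfl (fun i _ => by rw [mul_ite, mul_one, mul_zero]),
      Finset.sum_ite_eq']
    simp
  rw [hrhs]
  linear_combination -hcol
end

section
/- For n ≥ 2 and any β ∈ T_n, f_{n+1}(ι^R(β)) = 0 and f_{n+1}(ι^L(β)) = 0. -/
open Matrix Polynomial

lemma Vmat_mulVec_single {R : Type*} [CommRing R] (x y : R) {m k : ℕ} (j : Fin m)
    (hj : (j : ℕ) + 1 ≠ k) :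
    Vmat x y m k *ᵥ Pi.single j 1 = Pi.single j 1 := by
  funext r
  simp [mulVec_single, Vmat, Ne.symm hj, Pi.single_apply, eq_comm]

lemma TwinGroup.closure_range_of (m : ℕ) :
    Subgroup.closure (Set.range (TwinGroup.of (m := m))) = ⊤ :=
  PresentedGroup.closure_range_of (twinRels m)

lemma MonoidHom.mulVec_eq_self_of_closure_eq_top {G n R : Type*} [Group G] [Fintype n]
    [DecidableEq n] [CommRing R] (ρ : G →* Matrix n n R) {s : Set G}
    (hs : Subgroup.closure s = ⊤) {v : n → R} (hv : ∀ g ∈ s, ρ g *ᵥ v = v) (g : G) :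
    ρ g *ᵥ v = v := by
  induction hs ▸ Subgroup.mem_top g using Subgroup.closure_induction with
  | mem g hg => exact hv g hg
  | one => simp
  | mul g h _ _ hg hh => rw [map_mul, ← mulVec_mulVec, hh, hg]
  | inv g _ hg =>
    calc ρ g⁻¹ *ᵥ v = ρ g⁻¹ *ᵥ (ρ g *ᵥ v) := by rw [hg]
      _ = v := by rw [mulVec_mulVec, ← map_mul, inv_mul_cancel, map_one, one_mulVec]

lemma Matrix.det_sub_one_eq_zero_of_mulVec_single_eq {n R : Type*} [Fintype n]
    [DecidableEq n] [CommRing R] {A : Matrix n n R} (j : n)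
    (hA : A *ᵥ Pi.single j 1 = Pi.single j 1) :
    (A - 1).det = 0 := by
  refine det_eq_zero_of_column_eq_zero j fun i => ?_
  have hcol : A i j = (Pi.single j 1 : n → R) i := by simpa [mulVec_single] using congrFun hA i
  simp [hcol, one_apply, Pi.single_apply, eq_comm]

lemma TwinGroup.det_sub_one_eq_zero_of_of_mulVec_single {R : Type*} [CommRing R] {m n : ℕ}
    (ρ : TwinGroup m →* Matrix (Fin n) (Fin n) R) (j : Fin n)
    (hρ : ∀ i, ρ (TwinGroup.of i) *ᵥ Pi.single j 1 = Pi.single j 1) (β : TwinGroup m) :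
    (ρ β - 1).det = 0 :=
  det_sub_one_eq_zero_of_mulVec_single_eq j <|
    ρ.mulVec_eq_self_of_closure_eq_top (TwinGroup.closure_range_of m)
      (by rintro _ ⟨i, rfl⟩; exact hρ i) β

theorem stmt13_general (m : ℕ)
    (ψ' : TwinGroup (m+1) →* Matrix (Fin (m+1)) (Fin (m+1)) Zx)
    (hψ' : ∀ i : Fin (m+1), ψ' (TwinGroup.of i) = Vmat xx xx (m+1) ((i : ℕ) + 1))
    (ιR ιL : TwinGroup m →* TwinGroup (m+1))
    (hιR : ∀ i : Fin m, ιR (TwinGroup.of i) = TwinGroup.of i.castSucc)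
    (hιL : ∀ i : Fin m, ιL (TwinGroup.of i) = TwinGroup.of i.succ)
    (β : TwinGroup m) :
    Matrix.det (ψ' (ιR β) - 1) / ((-xx)^(m+1) * Ux (m+1)) = 0 ∧
    Matrix.det (ψ' (ιL β) - 1) / ((-xx)^(m+1) * Ux (m+1)) = 0 := by
  have hR : (ψ' (ιR β) - 1).det = 0 :=
    TwinGroup.det_sub_one_eq_zero_of_of_mulVec_single (ψ'.comp ιR) (Fin.last m) (fun i => by
      rw [MonoidHom.comp_apply, hιR, hψ']
      exact Vmat_mulVec_single _ _ _ (by rw [Fin.val_castSucc, Fin.val_last]; omega)) β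
  have hL : (ψ' (ιL β) - 1).det = 0 :=
    TwinGroup.det_sub_one_eq_zero_of_of_mulVec_single (ψ'.comp ιL) 0 (fun i => by
      rw [MonoidHom.comp_apply, hιL, hψ']
      exact Vmat_mulVec_single _ _ _ (by simp)) β
  exact ⟨by rw [hR, zero_div], by rw [hL, zero_div]⟩

/-- Lemma 4.6(a): for `n ≥ 2` (`n = m+1`) and `β ∈ T_n`,
`f_{n+1}(ι^R(β)) = 0` and `f_{n+1}(ι^L(β)) = 0`. -/
theorem stmt13 (m : ℕ) (hm : 1 ≤ m)
    (ψ' : TwinGroup (m+1) →* Matrix (Fin (m+1)) (Fin (m+1)) Zx)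
    (hψ' : ∀ i : Fin (m+1), ψ' (TwinGroup.of i) = Vmat xx xx (m+1) ((i : ℕ) + 1))
    (ιR ιL : TwinGroup m →* TwinGroup (m+1))
    (hιR : ∀ i : Fin m, ιR (TwinGroup.of i) = TwinGroup.of i.castSucc)
    (hιL : ∀ i : Fin m, ιL (TwinGroup.of i) = TwinGroup.of i.succ)
    (β : TwinGroup m) :
    Matrix.det (ψ' (ιR β) - 1) / ((-xx)^(m+1) * Ux (m+1)) = 0 ∧
    Matrix.det (ψ' (ιL β) - 1) / ((-xx)^(m+1) * Ux (m+1)) = 0 :=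
  stmt13_general m ψ' hψ' ιR ιL hιR hιL β
end
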